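/- Let A be a unital C*-algebra and a ∈ A with Im a strictly positive. Then a is invertible, Im(a^{-1}) = −a^{-1}·(Im a)·(a*)^{-1}, and −Im(a^{-1}) is strictly positive. In particular, every element of the operator upper half-plane ℍ⁺(A) is invertible. -/

import Mathlib

noncomputable section

/-- The imaginary part `Im a = (a - a*)/(2i)` of an element of a complex star algebra. -/
def aIm {A : Type*} [NonUnitalRing A] [StarRing A] [Module ℂ A] (a : A) : A :=
  ((2 * Complex.I)⁻¹ : ℂ) • (a - star a)

/-- `k > 0`: `k` is selfadjoint, nonnegative and invertible. -/
def StrictlyPos {A : Type*} [Ring A] [StarRing A] [PartialOrder A] (k : A) : Prop :=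
  IsSelfAdjoint k ∧ 0 ≤ k ∧ IsUnit k

/-!
Write `a = h + i b` with `h = Re a` selfadjoint and `b = Im a > 0`. Expanding,
`a b⁻¹ a* = b + h b⁻¹ h = a* b⁻¹ a`, and `h b⁻¹ h ≥ 0`, so both products dominate `b` and are
therefore invertible. Hence `a` has a right and a left inverse. The formula for `Im (a⁻¹)` is the
identity `a⁻¹ - (a*)⁻¹ = a⁻¹ (a* - a) (a*)⁻¹`, which exhibits `-Im (a⁻¹)` as the congruence
`a⁻¹ b (a⁻¹)*` of a strictly positive element by a unit.
-/

open Complex ComplexStarModule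
open scoped Ring

lemma strictlyPos_iff_isStrictlyPositive {A : Type*} [Ring A] [StarRing A] [PartialOrder A]
    [StarOrderedRing A] {k : A} : StrictlyPos k ↔ IsStrictlyPositive k :=
  ⟨fun ⟨_, hk, hu⟩ => hu.isStrictlyPositive hk, fun h => ⟨h.isSelfAdjoint, h.nonneg, h.isUnit⟩⟩

lemma aIm_eq_imaginaryPart {A : Type*} [NonUnitalRing A] [StarRing A] [Module ℂ A]
    [StarModule ℂ A] (a : A) : aIm a = ℑ a := by
  rw [aIm, imaginaryPart_apply_coe, ← Complex.coe_smul, smul_smul]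
  congr 1
  simp

lemma aIm_ringInverse {A : Type*} [Ring A] [StarRing A] [Algebra ℂ A] (a : A) :
    aIm a⁻¹ʳ = -(a⁻¹ʳ * aIm a * (star a)⁻¹ʳ) := by
  rw [aIm, aIm, ← Ring.inverse_star, Ring.inverse_sub_inverse isUnit_star.symm, mul_smul_comm,
    smul_mul_assoc, ← smul_neg, ← neg_mul, ← mul_neg, neg_sub]

lemma isUnit_of_isUnit_mul_of_isUnit_mul {M : Type*} [Monoid M] {a x y : M} (hx : IsUnit (a * x))
    (hy : IsUnit (y * a)) : IsUnit a := by
  obtain ⟨u, hu⟩ := hx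
  obtain ⟨v, hv⟩ := hy
  exact isUnit_iff_exists_and_exists.mpr ⟨⟨x * ↑u⁻¹, by rw [← mul_assoc, ← hu, u.mul_inv]⟩,
    ⟨↑v⁻¹ * y, by rw [mul_assoc, ← hv, v.inv_mul]⟩⟩

lemma add_smul_mul_inverse_mul_sub_smul {R A : Type*} [CommRing R] [Ring A] [Algebra R A]
    {z : R} (hz : z * z = -1) (h : A) {b : A} (hb : IsUnit b) :
    (h + z • b) * b⁻¹ʳ * (h - z • b) = b + h * b⁻¹ʳ * h := by
  simp only [add_mul, mul_sub, smul_mul_assoc, mul_smul_comm, Ring.mul_inverse_cancel b hb,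
    mul_assoc, Ring.inverse_mul_cancel b hb, mul_one, one_mul, smul_add, smul_smul, hz,
    neg_one_smul]
  abel

section CStarAlgebra

variable {A : Type*} [CStarAlgebra A] [PartialOrder A] [StarOrderedRing A]

lemma isUnit_add_I_smul {h b : A} (hh : IsSelfAdjoint h) (hb : IsStrictlyPositive b) :
    IsUnit (h + I • b) := by
  have hpos : IsStrictlyPositive (b + h * b⁻¹ʳ * h) :=
    hb.add_nonneg (hh.conjugate_nonneg hb.ringInverse.nonneg)
  have hright := add_smul_mul_inverse_mul_sub_smul I_mul_I h hb.isUnit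
  have hleft := add_smul_mul_inverse_mul_sub_smul (z := -I) (by simp) h hb.isUnit
  rw [neg_smul, ← sub_eq_add_neg, sub_neg_eq_add] at hleft
  refine isUnit_of_isUnit_mul_of_isUnit_mul (x := b⁻¹ʳ * (h - I • b))
    (y := (h - I • b) * b⁻¹ʳ) ?_ ?_
  · rw [← mul_assoc, hright]
    exact hpos.isUnit
  · rw [hleft]
    exact hpos.isUnit

lemma isUnit_of_isStrictlyPositive_imaginaryPart {a : A} (ha : IsStrictlyPositive (ℑ a : A)) :
    IsUnit a :=
  realPart_add_I_smul_imaginaryPart a ▸ isUnit_add_I_smul (ℜ a).2 ha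

lemma isUnit_of_strictlyPos_aIm {a : A} (ha : StrictlyPos (aIm a)) : IsUnit a :=
  isUnit_of_isStrictlyPositive_imaginaryPart <|
    aIm_eq_imaginaryPart a ▸ strictlyPos_iff_isStrictlyPositive.mp ha

end CStarAlgebra

/-- If `Im a > 0` in a unital C*-algebra, then `a` is invertible,
`Im(a⁻¹) = -a⁻¹·(Im a)·(a*)⁻¹` and `-Im(a⁻¹) > 0`; in particular every element of the
operator upper half-plane is invertible. -/
theorem stmt_15 {A : Type*} [CStarAlgebra A] [PartialOrder A] [StarOrderedRing A]
    (a : A) (ha : StrictlyPos (aIm a)) :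
    IsUnit a ∧
    aIm (Ring.inverse a) = -(Ring.inverse a * aIm a * Ring.inverse (star a)) ∧
    StrictlyPos (-(aIm (Ring.inverse a))) ∧
    (∀ c : A, StrictlyPos (aIm c) → IsUnit c) := by
  have hu : IsUnit a := isUnit_of_strictlyPos_aIm ha
  refine ⟨hu, aIm_ringInverse a, ?_, fun c hc => isUnit_of_strictlyPos_aIm hc⟩
  rw [aIm_ringInverse, neg_neg, Ring.inverse_star, strictlyPos_iff_isStrictlyPositive,
    hu.ringInverse.isStrictlyPositive_star_right_conjugate_iff]
  exact strictlyPos_iff_isStrictlyPositive.mp ha
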